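/- arXiv:cs/0608040 — 2 statements merged into one kernel-verified Lean document; each statement's English description precedes it below -/
import Mathlib

section
/- If t → t' is a single reduction step in λ_LAL, then t^- →*_β t'^-, i.e., the erasure of t reduces to the erasure of t' by zero or more β-reduction steps of the pure lambda-calculus. -/
set_option maxHeartbeats 1000000

/-! ## Terms of the light affine lambda-calculus λ_LAL (de Bruijn indices) -/

inductive Tm : Type where
  | var : ℕ → Tm
  | lam : Tm → Tm
  | app : Tm → Tm → Tm
  | bang : Tm → Tm
  /-- `letBang u t` is `let u be !x in t`; `t` binds de Bruijn index 0. -/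
  | letBang : Tm → Tm → Tm
  | para : Tm → Tm
  /-- `letPara u t` is `let u be §x in t`; `t` binds de Bruijn index 0. -/
  | letPara : Tm → Tm → Tm

namespace LAL

def upRen (f : ℕ → ℕ) : ℕ → ℕ
  | 0 => 0
  | n + 1 => f n + 1

def rename (f : ℕ → ℕ) : Tm → Tm
  | .var n => .var (f n)
  | .lam t => .lam (rename (upRen f) t)
  | .app t u => .app (rename f t) (rename f u)
  | .bang t => .bang (rename f t)
  | .letBang u t => .letBang (rename f u) (rename (upRen f) t)
  | .para t => .para (rename f t)
  | .letPara u t => .letPara (rename f u) (rename (upRen f) t)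

/-- Capture-avoiding substitution `t[u / var k]` (indices above `k` are shifted
down). -/
def sub : Tm → ℕ → Tm → Tm
  | .var n, k, u => if n = k then rename (· + k) u else if k < n then .var (n - 1) else .var n
  | .lam t, k, u => .lam (sub t (k + 1) u)
  | .app t v, k, u => .app (sub t k u) (sub v k u)
  | .bang t, k, u => .bang (sub t k u)
  | .letBang v t, k, u => .letBang (sub v k u) (sub t (k + 1) u)
  | .para t, k, u => .para (sub t k u)
  | .letPara v t, k, u => .letPara (sub v k u) (sub t (k + 1) u)

/-! ## Reduction -/

inductive Rule : Type where
  | beta | bang | para | com1 | com2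

/-- One-step reduction of λ_LAL: contextual closure of the rules
(β), (!), (§), (com1), (com2). -/
inductive Step : Rule → Tm → Tm → Prop where
  | beta {t u} : Step .beta (.app (.lam t) u) (sub t 0 u)
  | bang {t u} : Step .bang (.letBang (.bang u) t) (sub t 0 u)
  | para {t u} : Step .para (.letPara (.para u) t) (sub t 0 u)
  | com1BB {u₁ t₁ t₂} : Step .com1 (.letBang (.letBang u₁ t₁) t₂)
      (.letBang u₁ (.letBang t₁ (rename (upRen (· + 1)) t₂)))
  | com1BP {u₁ t₁ t₂} : Step .com1 (.letPara (.letBang u₁ t₁) t₂)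
      (.letBang u₁ (.letPara t₁ (rename (upRen (· + 1)) t₂)))
  | com1PB {u₁ t₁ t₂} : Step .com1 (.letBang (.letPara u₁ t₁) t₂)
      (.letPara u₁ (.letBang t₁ (rename (upRen (· + 1)) t₂)))
  | com1PP {u₁ t₁ t₂} : Step .com1 (.letPara (.letPara u₁ t₁) t₂)
      (.letPara u₁ (.letPara t₁ (rename (upRen (· + 1)) t₂)))
  | com2B {u₁ t₁ t₂} : Step .com2 (.app (.letBang u₁ t₁) t₂)
      (.letBang u₁ (.app t₁ (rename (· + 1) t₂)))
  | com2P {u₁ t₁ t₂} : Step .com2 (.app (.letPara u₁ t₁) t₂)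
      (.letPara u₁ (.app t₁ (rename (· + 1) t₂)))
  | congLam {r t t'} : Step r t t' → Step r (.lam t) (.lam t')
  | congApp₁ {r t t' u} : Step r t t' → Step r (.app t u) (.app t' u)
  | congApp₂ {r t u u'} : Step r u u' → Step r (.app t u) (.app t u')
  | congBang {r t t'} : Step r t t' → Step r (.bang t) (.bang t')
  | congPara {r t t'} : Step r t t' → Step r (.para t) (.para t')
  | congLetBang₁ {r u u' t} : Step r u u' → Step r (.letBang u t) (.letBang u' t)
  | congLetBang₂ {r u t t'} : Step r t t' → Step r (.letBang u t) (.letBang u t')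
  | congLetPara₁ {r u u' t} : Step r u u' → Step r (.letPara u t) (.letPara u' t)
  | congLetPara₂ {r u t t'} : Step r t t' → Step r (.letPara u t) (.letPara u t')

/-- Many-step reduction. -/
def Red : Tm → Tm → Prop := Relation.ReflTransGen (fun a b => ∃ r, Step r a b)

/-! ## Types of intuitionistic Light Affine Logic -/

inductive Ty : Type where
  | tvar : ℕ → Ty
  | lolli : Ty → Ty → Ty
  | bang : Ty → Ty
  | para : Ty → Ty
  | all : Ty → Ty

def liftTy (c : ℕ) : Ty → Ty
  | .tvar n => if n < c then .tvar n else .tvar (n + 1)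
  | .lolli A B => .lolli (liftTy c A) (liftTy c B)
  | .bang A => .bang (liftTy c A)
  | .para A => .para (liftTy c A)
  | .all A => .all (liftTy (c + 1) A)

def substTy : Ty → ℕ → Ty → Ty
  | .tvar n, k, B => if n = k then (liftTy 0)^[k] B else if k < n then .tvar (n - 1) else .tvar n
  | .lolli A C, k, B => .lolli (substTy A k B) (substTy C k B)
  | .bang A, k, B => .bang (substTy A k B)
  | .para A, k, B => .para (substTy A k B)
  | .all A, k, B => .all (substTy A (k + 1) B)

/-! ## Syntactic sugar: tensor -/

/-- `A ⊗ B = ∀α.((A ⊸ B ⊸ α) ⊸ α)`. -/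
def tensorTy (A B : Ty) : Ty :=
  .all (.lolli (.lolli (liftTy 0 A) (.lolli (liftTy 0 B) (.tvar 0))) (.tvar 0))

/-- `t ⊗ u = λy.((y)t)u`. -/
def tensorTm (t u : Tm) : Tm :=
  .lam (.app (.app (.var 0) (rename (· + 1) t)) (rename (· + 1) u))

/-- `let u be x⊗y in t = (u)λx.λy.t`; in `t`, index 1 is the first component
and index 0 the second. -/
def letTen (u t : Tm) : Tm := .app u (.lam (.lam t))

/-! ## Typing (natural-deduction presentation of LAL, with discharged marks) -/

inductive Mark : Type where
  | pl  -- plain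
  | db  -- !-discharged
  | dp  -- §-discharged
  deriving DecidableEq

/-- Transposition of de Bruijn indices `i` and `i+1`. -/
def swapF (i : ℕ) : ℕ → ℕ := fun n => if n = i then i + 1 else if n = i + 1 then i else n

inductive Tj : List (Mark × Ty) → Tm → Ty → Prop where
  | ax (A : Ty) : Tj [(.pl, A)] (.var 0) A
  | weak {Γ t A} (e : Mark × Ty) : Tj Γ t A → Tj (e :: Γ) (rename (· + 1) t) A
  | exch {Γ Δ : List (Mark × Ty)} {a b t A} :
      Tj (Γ ++ a :: b :: Δ) t A → Tj (Γ ++ b :: a :: Δ) (rename (swapF Γ.length) t) A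
  | cntr {Γ t A B} : Tj ((.db, B) :: (.db, B) :: Γ) t A →
      Tj ((.db, B) :: Γ) (rename Nat.pred t) A
  | cut {Γ Δ : List (Mark × Ty)} {u t A C} : Tj Δ u A → Tj ((.pl, A) :: Γ) t C →
      Tj (Γ ++ Δ) (sub t 0 (rename (· + Γ.length) u)) C
  | lam {Γ t A B} : Tj ((.pl, A) :: Γ) t B → Tj Γ (.lam t) (.lolli A B)
  | app {Γ Δ : List (Mark × Ty)} {t u A B} : Tj Γ t (.lolli A B) → Tj Δ u A →
      Tj (Γ ++ Δ) (.app t (rename (· + Γ.length) u)) B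
  | allI {Γ : List (Mark × Ty)} {t A} :
      Tj (Γ.map (fun e => (e.1, liftTy 0 e.2))) t A → Tj Γ t (.all A)
  | allE {Γ t A} (B : Ty) : Tj Γ t (.all A) → Tj Γ t (substTy A 0 B)
  | bangI₀ {t A} : Tj [] t A → Tj [] (.bang t) (.bang A)
  | bangI₁ {t A B} : Tj [(.pl, B)] t A → Tj [(.db, B)] (.bang t) (.bang A)
  | bangE {Γ Δ : List (Mark × Ty)} {u t A C} : Tj Δ u (.bang A) →
      Tj ((.db, A) :: Γ) t C →
      Tj (Γ ++ Δ) (.letBang (rename (· + Γ.length) u) t) C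
  | paraI {Γ Γ' : List (Mark × Ty)} {t A} : Tj Γ t A →
      (∀ e ∈ Γ, e.1 = Mark.pl) →
      List.Forall₂ (fun (e e' : Mark × Ty) => e'.2 = e.2 ∧ e'.1 ≠ Mark.pl) Γ Γ' →
      Tj Γ' (.para t) (.para A)
  | paraE {Γ Δ : List (Mark × Ty)} {u t A C} : Tj Δ u (.para A) →
      Tj ((.dp, A) :: Γ) t C →
      Tj (Γ ++ Δ) (.letPara (rename (· + Γ.length) u) t) C

/-! ## Church encodings -/

/-- Tally integers : `N = ∀α. !(α ⊸ α) ⊸ §(α ⊸ α)`. -/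
def natTy : Ty := .all (.lolli (.bang (.lolli (.tvar 0) (.tvar 0)))
  (.para (.lolli (.tvar 0) (.tvar 0))))

/-- Church numeral `n̲` of type `N`. -/
def churchNat (n : ℕ) : Tm :=
  .lam (.letBang (.var 0) (.para (.lam ((fun b => Tm.app (.var 1) b)^[n] (.var 0)))))

/-- Lists of elements of type `A` : `L_A = ∀α. !(A ⊸ α ⊸ α) ⊸ §(α ⊸ α)`. -/
def listTy (A : Ty) : Ty := .all (.lolli (.bang (.lolli (liftTy 0 A)
  (.lolli (.tvar 0) (.tvar 0)))) (.para (.lolli (.tvar 0) (.tvar 0))))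

/-- Church encoding of the list whose elements are the terms `as`. -/
def encListTm (as : List Tm) : Tm :=
  .lam (.letBang (.var 0) (.para (.lam
    (as.foldr (fun a acc => Tm.app (.app (.var 1) (rename (· + 3) a)) acc) (.var 0)))))

/-! ## Pure lambda-terms, β-reduction, and system F -/

inductive PTm : Type where
  | var : ℕ → PTm
  | lam : PTm → PTm
  | app : PTm → PTm → PTm

def prename (f : ℕ → ℕ) : PTm → PTm
  | .var n => .var (f n)
  | .lam t => .lam (prename (upRen f) t)
  | .app t u => .app (prename f t) (prename f u)

def psub : PTm → ℕ → PTm → PTm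
  | .var n, k, u => if n = k then prename (· + k) u else if k < n then .var (n - 1) else .var n
  | .lam t, k, u => .lam (psub t (k + 1) u)
  | .app t v, k, u => .app (psub t k u) (psub v k u)

/-- β-reduction of the pure lambda-calculus (one step, contextual). -/
inductive PStep : PTm → PTm → Prop where
  | beta {t u} : PStep (.app (.lam t) u) (psub t 0 u)
  | congLam {t t'} : PStep t t' → PStep (.lam t) (.lam t')
  | congApp₁ {t t' u} : PStep t t' → PStep (.app t u) (.app t' u)
  | congApp₂ {t u u'} : PStep u u' → PStep (.app t u) (.app t u')

/-- Zero or more β-reduction steps. -/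
def PRed : PTm → PTm → Prop := Relation.ReflTransGen PStep

/-- Erasure of λ_LAL terms to pure lambda-terms. -/
def eraseTm : Tm → PTm
  | .var n => .var n
  | .lam t => .lam (eraseTm t)
  | .app t u => .app (eraseTm t) (eraseTm u)
  | .bang t => eraseTm t
  | .para t => eraseTm t
  | .letBang u t => psub (eraseTm t) 0 (eraseTm u)
  | .letPara u t => psub (eraseTm t) 0 (eraseTm u)

/-- Types of system F. -/
inductive FTy : Type where
  | tvar : ℕ → FTy
  | arr : FTy → FTy → FTy
  | all : FTy → FTy

def liftF (c : ℕ) : FTy → FTy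
  | .tvar n => if n < c then .tvar n else .tvar (n + 1)
  | .arr A B => .arr (liftF c A) (liftF c B)
  | .all A => .all (liftF (c + 1) A)

def substF : FTy → ℕ → FTy → FTy
  | .tvar n, k, B => if n = k then (liftF 0)^[k] B else if k < n then .tvar (n - 1) else .tvar n
  | .arr A C, k, B => .arr (substF A k B) (substF C k B)
  | .all A, k, B => .all (substF A (k + 1) B)

/-- Erasure of LAL formulas to system F types. -/
def eraseTy : Ty → FTy
  | .tvar n => .tvar n
  | .lolli A B => .arr (eraseTy A) (eraseTy B)
  | .bang A => eraseTy A
  | .para A => eraseTy A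
  | .all A => .all (eraseTy A)

/-- System F typing. -/
inductive FTj : List FTy → PTm → FTy → Prop where
  | var {Γ n A} : Γ[n]? = some A → FTj Γ (.var n) A
  | lam {Γ t A B} : FTj (A :: Γ) t B → FTj Γ (.lam t) (.arr A B)
  | app {Γ t u A B} : FTj Γ t (.arr A B) → FTj Γ u A → FTj Γ (.app t u) B
  | allI {Γ t A} : FTj (Γ.map (liftF 0)) t A → FTj Γ t (.all A)
  | allE {Γ t A} (B : FTy) : FTj Γ t (.all A) → FTj Γ t (substF A 0 B)

/-! Erasure forgets `!` and `§` and turns `let` into meta-level substitution. Hence (!), (§),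
(com1) and (com2) become syntactic identities between erasures (for (com1) this is the
substitution lemma `psub_psub`), and a (β)-redex erases to a β-redex. Contextual closure is
preserved because β-reduction is stable under substitution; a step inside the substituted term
may be duplicated or erased, which is why a single step is simulated only by `→*_β`. -/

def upSubst (σ : ℕ → PTm) : ℕ → PTm
  | 0 => .var 0
  | n + 1 => prename (· + 1) (σ n)

def psubst (σ : ℕ → PTm) : PTm → PTm
  | .var n => σ n
  | .lam t => .lam (psubst (upSubst σ) t)
  | .app t u => .app (psubst σ t) (psubst σ u)

def substAt (k : ℕ) (u : PTm) : ℕ → PTm := fun n =>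
  if n = k then prename (· + k) u else if k < n then .var (n - 1) else .var n

lemma upRen_comp (f g : ℕ → ℕ) : upRen f ∘ upRen g = upRen (f ∘ g) := by
  funext n; cases n <;> rfl

lemma prename_prename (f g : ℕ → ℕ) (t : PTm) :
    prename f (prename g t) = prename (f ∘ g) t := by
  induction t generalizing f g with
  | var n => rfl
  | lam t ih => simp only [prename, ih, upRen_comp]
  | app t u iht ihu => simp only [prename, iht, ihu]

lemma prename_eq_psubst (f : ℕ → ℕ) (t : PTm) :
    prename f t = psubst (fun n => .var (f n)) t := by
  induction t generalizing f with
  | var n => rfl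
  | lam t ih =>
    have hup : (fun n => PTm.var (upRen f n)) = upSubst (fun n => .var (f n)) := by
      funext n; cases n <;> rfl
    simp only [prename, psubst, ih, hup]
  | app t u iht ihu => simp only [prename, psubst, iht, ihu]

lemma psubst_prename (σ : ℕ → PTm) (f : ℕ → ℕ) (t : PTm) :
    psubst σ (prename f t) = psubst (σ ∘ f) t := by
  induction t generalizing σ f with
  | var n => rfl
  | lam t ih =>
    have hup : upSubst σ ∘ upRen f = upSubst (σ ∘ f) := by
      funext n; cases n <;> rfl
    simp only [prename, psubst, ih, hup]
  | app t u iht ihu => simp only [prename, psubst, iht, ihu]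

lemma prename_psubst (f : ℕ → ℕ) (σ : ℕ → PTm) (t : PTm) :
    prename f (psubst σ t) = psubst (prename f ∘ σ) t := by
  induction t generalizing σ f with
  | var n => rfl
  | lam t ih =>
    have hup : prename (upRen f) ∘ upSubst σ = upSubst (prename f ∘ σ) := by
      funext n
      rcases n with _ | n
      · rfl
      · simp only [Function.comp, upSubst, prename_prename]
        rfl
    simp only [prename, psubst, ih, hup]
  | app t u iht ihu => simp only [prename, psubst, iht, ihu]

lemma psubst_psubst (τ σ : ℕ → PTm) (t : PTm) :
    psubst τ (psubst σ t) = psubst (psubst τ ∘ σ) t := by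
  induction t generalizing σ τ with
  | var n => rfl
  | lam t ih =>
    have hup : psubst (upSubst τ) ∘ upSubst σ = upSubst (psubst τ ∘ σ) := by
      funext n
      rcases n with _ | n
      · rfl
      · simp only [Function.comp, upSubst, psubst_prename, prename_psubst]
        rfl
    simp only [psubst, ih, hup]
  | app t u iht ihu => simp only [psubst, iht, ihu]

lemma psubst_var (t : PTm) : psubst .var t = t := by
  induction t with
  | var n => rfl
  | lam t ih =>
    have hup : upSubst .var = .var := by funext n; cases n <;> rfl
    simp only [psubst, hup, ih]
  | app t u iht ihu => simp only [psubst, iht, ihu]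

lemma prename_add_zero (t : PTm) : prename (· + 0) t = t := by
  rw [prename_eq_psubst]
  exact psubst_var t

lemma substAt_self (k : ℕ) (u : PTm) : substAt k u k = prename (· + k) u := by
  simp [substAt]

lemma substAt_of_lt {k n : ℕ} (h : n < k) (u : PTm) : substAt k u n = .var n := by
  simp [substAt, h.ne, h.not_gt]

lemma substAt_of_gt {k n : ℕ} (h : k < n) (u : PTm) : substAt k u n = .var (n - 1) := by
  simp [substAt, h.ne', h]

lemma upSubst_substAt (k : ℕ) (u : PTm) : upSubst (substAt k u) = substAt (k + 1) u := by
  funext n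
  rcases n with _ | n
  · rfl
  rcases lt_trichotomy n k with h | rfl | h
  · simp only [upSubst, substAt_of_lt h, substAt_of_lt (Nat.succ_lt_succ h)]; rfl
  · simp only [upSubst, substAt_self, prename_prename]; rfl
  · simp only [upSubst, substAt_of_gt h, substAt_of_gt (Nat.succ_lt_succ h), prename]
    congr 1
    omega

lemma psub_eq_psubst (t : PTm) (k : ℕ) (u : PTm) : psub t k u = psubst (substAt k u) t := by
  induction t generalizing k with
  | var n => rfl
  | lam t ih => simp only [psub, psubst, ih, upSubst_substAt]
  | app t v iht ihv => simp only [psub, psubst, iht, ihv]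

lemma prename_psub_zero (f : ℕ → ℕ) (a b : PTm) :
    prename f (psub a 0 b) = psub (prename (upRen f) a) 0 (prename f b) := by
  simp only [psub_eq_psubst, prename_psubst, psubst_prename]
  congr 1
  funext n
  rcases n with _ | n
  · simp only [Function.comp, upRen, substAt_self, prename_add_zero]
  · simp only [Function.comp, upRen, substAt_of_gt (Nat.succ_pos _), Nat.add_one_sub_one, prename]

lemma psub_prename_add_succ (k : ℕ) (c u : PTm) :
    psub (prename (· + (k + 1)) c) 0 u = prename (· + k) c := by
  rw [psub_eq_psubst, prename_eq_psubst, psubst_psubst, prename_eq_psubst]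
  exact congrArg (psubst · c) (funext fun n => substAt_of_gt (Nat.succ_pos _) u)

lemma psub_prename_succ (s u : PTm) : psub (prename (· + 1) s) 0 u = s :=
  (psub_prename_add_succ 0 s u).trans (prename_add_zero s)

lemma psub_one_prename_upRen_succ (s u : PTm) :
    psub (prename (upRen (· + 1)) s) 1 u = s := by
  rw [psub_eq_psubst, prename_eq_psubst, psubst_psubst]
  conv_rhs => rw [← psubst_var s]
  congr 1
  funext n
  rcases n with _ | n
  · rfl
  · exact substAt_of_gt (Nat.one_lt_succ_succ n) u

lemma psub_psub (a b c : PTm) (k : ℕ) :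
    psub (psub a 0 b) k c = psub (psub a (k + 1) c) 0 (psub b k c) := by
  simp only [psub_eq_psubst, psubst_psubst]
  congr 1
  funext n
  rcases n with _ | n
  · simp only [Function.comp, psubst, substAt_self, substAt_of_lt (Nat.succ_pos k),
      prename_add_zero]
  rcases lt_trichotomy n k with h | rfl | h
  · simp only [Function.comp, psubst, substAt_of_gt (Nat.succ_pos n), Nat.add_one_sub_one,
      substAt_of_lt h, substAt_of_lt (Nat.succ_lt_succ h)]
  · simp only [Function.comp, psubst, substAt_of_gt (Nat.succ_pos n), Nat.add_one_sub_one,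
      substAt_self]
    rw [← psub_eq_psubst, psub_prename_add_succ]
  · simp only [Function.comp, psubst, substAt_of_gt (Nat.succ_pos n), Nat.add_one_sub_one,
      substAt_of_gt h, substAt_of_gt (Nat.succ_lt_succ h), substAt_of_gt (Nat.zero_lt_of_lt h)]

lemma eraseTm_rename (f : ℕ → ℕ) (t : Tm) :
    eraseTm (rename f t) = prename f (eraseTm t) := by
  induction t generalizing f <;>
    simp only [rename, eraseTm, prename, prename_psub_zero, *]

lemma eraseTm_sub (t : Tm) (k : ℕ) (u : Tm) :
    eraseTm (sub t k u) = psub (eraseTm t) k (eraseTm u) := by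
  induction t generalizing k with
  | var n =>
    simp only [sub, eraseTm, psub]
    split_ifs <;> simp only [eraseTm, eraseTm_rename]
  | _ => simp only [sub, eraseTm, psub, psub_psub, *]

lemma PStep.prename {t t' : PTm} (f : ℕ → ℕ) (h : PStep t t') :
    PStep (prename f t) (prename f t') := by
  induction h generalizing f with
  | beta => rw [prename_psub_zero]; exact .beta
  | congLam _ ih => exact .congLam (ih _)
  | congApp₁ _ ih => exact .congApp₁ (ih _)
  | congApp₂ _ ih => exact .congApp₂ (ih _)

lemma PStep.psub_left {t t' : PTm} (k : ℕ) (u : PTm) (h : PStep t t') :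
    PStep (psub t k u) (psub t' k u) := by
  induction h generalizing k with
  | beta => rw [psub_psub]; exact .beta
  | congLam _ ih => exact .congLam (ih _)
  | congApp₁ _ ih => exact .congApp₁ (ih _)
  | congApp₂ _ ih => exact .congApp₂ (ih _)

lemma PRed.lam {t t' : PTm} (h : PRed t t') : PRed (.lam t) (.lam t') :=
  Relation.ReflTransGen.lift PTm.lam (fun _ _ => PStep.congLam) _ _ h

lemma PRed.app_left {t t' u : PTm} (h : PRed t t') : PRed (.app t u) (.app t' u) :=
  Relation.ReflTransGen.lift (PTm.app · u) (fun _ _ => PStep.congApp₁) _ _ h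

lemma PRed.app_right {t u u' : PTm} (h : PRed u u') : PRed (.app t u) (.app t u') :=
  Relation.ReflTransGen.lift (PTm.app t) (fun _ _ => PStep.congApp₂) _ _ h

lemma PRed.psub_left {t t' : PTm} (k : ℕ) (u : PTm) (h : PRed t t') :
    PRed (psub t k u) (psub t' k u) :=
  Relation.ReflTransGen.lift (psub · k u) (fun _ _ => PStep.psub_left k u) _ _ h

lemma PStep.psub_right {u u' : PTm} (t : PTm) (k : ℕ) (h : PStep u u') :
    PRed (psub t k u) (psub t k u') := by
  induction t generalizing k with
  | var n =>
    simp only [psub]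
    split_ifs
    exacts [.single (h.prename _), .refl, .refl]
  | lam t ih => exact (ih (k + 1)).lam
  | app t v iht ihv => exact (iht k).app_left.trans (ihv k).app_right

lemma PRed.psub_right {u u' : PTm} (t : PTm) (k : ℕ) (h : PRed u u') :
    PRed (psub t k u) (psub t k u') := by
  induction h with
  | refl => exact .refl
  | tail _ hs ih => exact ih.trans (hs.psub_right t k)

end LAL

open LAL in
/-- If `t → t'` is a single reduction step in λ_LAL, then
`t⁻ →*_β t'⁻` (zero or more β-steps of the pure lambda-calculus). -/
theorem erasure_simulates_reduction (r : Rule) (t t' : Tm) (h : Step r t t') :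
    PRed (eraseTm t) (eraseTm t') := by
  induction h with
  | beta => exact .single (eraseTm_sub .. ▸ PStep.beta)
  | bang | para => exact eraseTm_sub .. ▸ .refl
  | com1BB | com1BP | com1PB | com1PP =>
    simp only [eraseTm, eraseTm_rename, psub_psub, Nat.zero_add, psub_one_prename_upRen_succ]
    exact .refl
  | com2B | com2P =>
    simp only [eraseTm, psub, eraseTm_rename, psub_prename_succ]
    exact .refl
  | congLam _ ih => exact ih.lam
  | congApp₁ _ ih => exact ih.app_left
  | congApp₂ _ ih => exact ih.app_right
  | congBang _ ih | congPara _ ih => exact ih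
  | congLetBang₁ _ ih | congLetPara₁ _ ih => exact ih.psub_right _ 0
  | congLetBang₂ _ ih | congLetPara₂ _ ih => exact ih.psub_left 0 _
end

section
/- Let N = ∀α. !(α ⊸ α) ⊸ §(α ⊸ α) be the type of tally integers in λ_LAL, with n̲ the Church numeral of n. For every polynomial P with coefficients in ℕ there exist an integer k and a closed λ_LAL term t_P of type N ⊸ §^k N such that t_P represents P, i.e., for every n ∈ ℕ, (t_P)n̲ reduces to §^k applied to the Church numeral of P(n). -/
set_option maxHeartbeats 1000000

/-!
Horner's scheme, two §-levels per coefficient. A tally integer `n̲` can be consumed only once,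
so each step `a ↦ a·n + c` needs a fresh copy of `n`. Applied to `!bangSucc`, where
`bangSucc : !N ⊸ !N` is the successor under `!`, `n̲` yields a `§`-boxed map sending `!0̲` to `!n̲`:
one level deeper `n` is `!`-discharged and may be contracted. In the same way the accumulator `a`
is lifted one level by iterating `succ` `a` times from `0̲`, and one level further iterating
`!(add n̲)` `a` times gives the map `z ↦ a·n + z` that the next step applies to its coefficient.
Hence `P` is represented at depth `2 · deg P`.
-/

namespace LAL

open Tm

def wellScoped : ℕ → Tm → Bool
  | k, .var n => n < k
  | k, .lam t => wellScoped (k + 1) t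
  | k, .app t u => wellScoped k t && wellScoped k u
  | k, .bang t => wellScoped k t
  | k, .letBang u t => wellScoped k u && wellScoped (k + 1) t
  | k, .para t => wellScoped k t
  | k, .letPara u t => wellScoped k u && wellScoped (k + 1) t

def Closed (t : Tm) : Prop := wellScoped 0 t

instance : DecidablePred Closed := fun t => inferInstanceAs (Decidable (wellScoped 0 t))

theorem wellScoped_mono {k k' : ℕ} (h : k ≤ k') {t : Tm} (ht : wellScoped k t) :
    wellScoped k' t := by
  induction t generalizing k k' with
  | var n => simp only [wellScoped, decide_eq_true_eq] at *; omega
  | lam t ih => exact ih (by omega) ht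
  | bang t ih | para t ih => exact ih h ht
  | app t u iht ihu =>
    simp only [wellScoped, Bool.and_eq_true] at *; exact ⟨iht h ht.1, ihu h ht.2⟩
  | letBang u t ihu iht | letPara u t ihu iht =>
    simp only [wellScoped, Bool.and_eq_true] at *; exact ⟨ihu h ht.1, iht (by omega) ht.2⟩

theorem Closed.wellScoped {t : Tm} (ht : Closed t) (k : ℕ) : wellScoped k t :=
  wellScoped_mono (Nat.zero_le k) ht

@[simp]
theorem closed_app {t u : Tm} : Closed (app t u) ↔ Closed t ∧ Closed u := by
  simp [Closed, LAL.wellScoped]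

theorem rename_eq_self_of_wellScoped {k : ℕ} {f : ℕ → ℕ} {t : Tm} (ht : wellScoped k t)
    (hf : ∀ n < k, f n = n) : rename f t = t := by
  have up : ∀ {k : ℕ} {f : ℕ → ℕ}, (∀ n < k, f n = n) → ∀ n < k + 1, upRen f n = n := by
    intro k f hf n hn
    cases n with
    | zero => rfl
    | succ n => simp only [upRen, hf n (by omega)]
  induction t generalizing k f with
  | var n => simp only [wellScoped, decide_eq_true_eq] at ht; simp [rename, hf n ht]
  | lam t ih => simp [rename, ih ht (up hf)]
  | bang t ih | para t ih => simp [rename, ih ht hf]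
  | app t u iht ihu =>
    simp only [wellScoped, Bool.and_eq_true] at ht; simp [rename, iht ht.1 hf, ihu ht.2 hf]
  | letBang u t ihu iht | letPara u t ihu iht =>
    simp only [wellScoped, Bool.and_eq_true] at ht
    simp [rename, ihu ht.1 hf, iht ht.2 (up hf)]

-- As simp lemmas, this and `Closed.sub_eq` let `simp [sub]` evaluate a substitution into a term
-- assembled from closed gadgets.
@[simp]
theorem Closed.rename_eq {t : Tm} (ht : Closed t) (f : ℕ → ℕ) : rename f t = t :=
  rename_eq_self_of_wellScoped ht (by simp)

@[simp]
theorem rename_id (t : Tm) : rename (fun n => n) t = t := by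
  have up : upRen (fun n => n) = fun n => n := funext fun n => by cases n <;> rfl
  induction t <;> simp_all [rename]

theorem sub_eq_self_of_wellScoped {k j : ℕ} {t : Tm} (ht : wellScoped k t) (hkj : k ≤ j)
    (u : Tm) : sub t j u = t := by
  induction t generalizing k j with
  | var n =>
    simp only [wellScoped, decide_eq_true_eq] at ht
    simp only [sub]; rw [if_neg (by omega), if_neg (by omega)]
  | lam t ih => simp [sub, ih ht (by omega : k + 1 ≤ j + 1)]
  | bang t ih | para t ih => simp [sub, ih ht hkj]
  | app t v iht ihv =>
    simp only [wellScoped, Bool.and_eq_true] at ht; simp [sub, iht ht.1 hkj, ihv ht.2 hkj]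
  | letBang v t ihv iht | letPara v t ihv iht =>
    simp only [wellScoped, Bool.and_eq_true] at ht
    simp [sub, ihv ht.1 hkj, iht ht.2 (by omega : k + 1 ≤ j + 1)]

@[simp]
theorem Closed.sub_eq {t : Tm} (ht : Closed t) (j : ℕ) (u : Tm) : sub t j u = t :=
  sub_eq_self_of_wellScoped ht (Nat.zero_le j) u

theorem rename_iterate_app (f : ℕ → ℕ) (w t : Tm) (m : ℕ) :
    rename f ((fun b => app w b)^[m] t) = (fun b => app (rename f w) b)^[m] (rename f t) := by
  induction m with
  | zero => rfl
  | succ m ih => simp only [Function.iterate_succ_apply', rename, ih]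

theorem sub_iterate_app (w t : Tm) (k : ℕ) (u : Tm) (m : ℕ) :
    sub ((fun b => app w b)^[m] t) k u = (fun b => app (sub w k u) b)^[m] (sub t k u) := by
  induction m with
  | zero => rfl
  | succ m ih => simp only [Function.iterate_succ_apply', sub, ih]

theorem wellScoped_iterate_app {k : ℕ} {w t : Tm} (hw : wellScoped k w) (ht : wellScoped k t)
    (m : ℕ) : wellScoped k ((fun b => app w b)^[m] t) := by
  induction m with
  | zero => exact ht
  | succ m ih => simp [Function.iterate_succ_apply', LAL.wellScoped, hw, ih]

@[simp]
theorem churchNat_closed (n : ℕ) : Closed (churchNat n) := by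
  simp [Closed, churchNat, wellScoped, wellScoped_iterate_app]

theorem Red.refl (t : Tm) : Red t t := Relation.ReflTransGen.refl

theorem Red.trans {a b c : Tm} (hab : Red a b) (hbc : Red b c) : Red a c :=
  Relation.ReflTransGen.trans hab hbc

theorem Red.of_step {r : Rule} {a b : Tm} (h : Step r a b) : Red a b :=
  Relation.ReflTransGen.single ⟨r, h⟩

theorem Red.beta {t u : Tm} : Red (app (lam t) u) (sub t 0 u) := .of_step .beta

theorem Red.bang {t u : Tm} : Red (letBang (.bang u) t) (sub t 0 u) := .of_step .bang

theorem Red.para {t u : Tm} : Red (letPara (.para u) t) (sub t 0 u) := .of_step .para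

theorem Red.map {F : Tm → Tm} (hF : ∀ {r a b}, Step r a b → Step r (F a) (F b)) {a b : Tm}
    (h : Red a b) : Red (F a) (F b) :=
  Relation.ReflTransGen.lift F (fun _ _ ⟨r, hr⟩ => ⟨r, hF hr⟩) _ _ h

theorem Red.congLam {t t' : Tm} : Red t t' → Red (lam t) (lam t') := .map .congLam

theorem Red.congApp₁ {t t' u : Tm} : Red t t' → Red (app t u) (app t' u) := .map .congApp₁

theorem Red.congApp₂ {t u u' : Tm} : Red u u' → Red (app t u) (app t u') := .map .congApp₂

theorem Red.congBang {t t' : Tm} : Red t t' → Red (.bang t) (.bang t') := .map .congBang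

theorem Red.congPara {t t' : Tm} : Red t t' → Red (.para t) (.para t') := .map .congPara

theorem Red.congLetBang₁ {u u' t : Tm} : Red u u' → Red (letBang u t) (letBang u' t) :=
  .map .congLetBang₁

theorem Red.congLetBang₂ {u t t' : Tm} : Red t t' → Red (letBang u t) (letBang u t') :=
  .map .congLetBang₂

theorem Red.congLetPara₁ {u u' t : Tm} : Red u u' → Red (letPara u t) (letPara u' t) :=
  .map .congLetPara₁

theorem Red.iterate_app (w : Tm) {t t' : Tm} (h : Red t t') (m : ℕ) :
    Red ((fun b => app w b)^[m] t) ((fun b => app w b)^[m] t') := by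
  induction m with
  | zero => exact h
  | succ m ih => simpa only [Function.iterate_succ_apply'] using Red.congApp₂ ih

def funPow (w : Tm) (m : ℕ) : Tm := lam ((fun b => app w b)^[m] (var 0))

@[simp]
theorem funPow_closed {w : Tm} (hw : Closed w) (m : ℕ) : Closed (funPow w m) := by
  simp [Closed, funPow, wellScoped, wellScoped_iterate_app, hw.wellScoped]

theorem red_churchNat_app (m : ℕ) (w : Tm) :
    Red (app (churchNat m) (.bang w))
      (.para (lam ((fun b => app (rename (· + 1) w) b)^[m] (var 0)))) := by
  refine Red.beta.trans (Red.bang.trans ?_)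
  simp [sub, sub_iterate_app, Red.refl]

theorem red_churchNat_app_of_closed (m : ℕ) {w : Tm} (hw : Closed w) :
    Red (app (churchNat m) (.bang w)) (.para (funPow w m)) := by
  simpa [hw, funPow] using red_churchNat_app m w

theorem red_funPow_app {w : Tm} (hw : Closed w) (m : ℕ) (t : Tm) :
    Red (app (funPow w m) t) ((fun b => app w b)^[m] t) := by
  refine Red.beta.trans ?_
  simp [sub_iterate_app, hw.sub_eq, sub, Red.refl]

/-- `λa.λb.λu. let u be !f in let (a)!f be §g in let (b)!f be §g' in §(λz. (g)(g')z)` -/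
def addTm : Tm :=
  lam (lam (lam (letBang (var 0)
    (letPara (app (var 3) (.bang (var 0)))
      (letPara (app (var 3) (.bang (var 1)))
        (.para (lam (app (var 2) (app (var 1) (var 0))))))))))

@[simp]
theorem addTm_closed : Closed addTm := by decide

theorem red_add (a b : ℕ) :
    Red (app (app addTm (churchNat a)) (churchNat b)) (churchNat (a + b)) := by
  refine (Red.congApp₁ Red.beta).trans ?_
  simp [sub]
  refine Red.beta.trans ?_
  simp [sub]
  refine (Red.congLam (Red.congLetBang₂
    ((Red.congLetPara₁ (red_churchNat_app a _)).trans Red.para))).trans ?_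
  simp [sub, rename, rename_iterate_app, upRen]
  refine (Red.congLam (Red.congLetBang₂
    ((Red.congLetPara₁ (red_churchNat_app b _)).trans Red.para))).trans ?_
  simp [sub, rename, rename_iterate_app, upRen]
  refine (Red.congLam (Red.congLetBang₂ (Red.congPara (Red.congLam
    ((Red.congApp₂ Red.beta).trans Red.beta))))).trans ?_
  simp [sub, sub_iterate_app]
  rw [churchNat, Function.iterate_add_apply]
  exact Red.refl _

theorem red_add_iterate (n m a : ℕ) :
    Red ((fun b => app (app addTm (churchNat n)) b)^[m] (churchNat a))
      (churchNat (m * n + a)) := by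
  induction m with
  | zero => simpa using Red.refl _
  | succ m ih =>
    rw [Function.iterate_succ_apply', show (m + 1) * n + a = n + (m * n + a) by ring]
    exact (Red.congApp₂ ih).trans (red_add n _)

def succTm : Tm := app addTm (churchNat 1)

@[simp]
theorem succTm_closed : Closed succTm := by simp [succTm]

theorem red_succTm_iterate (m : ℕ) :
    Red ((fun b => app succTm b)^[m] (churchNat 0)) (churchNat m) := by
  simpa [succTm] using red_add_iterate 1 m 0

/-- Typing `churchNat c` directly would take `c - 1` contractions; `numeral c` is typed through
`succTm`. -/
def numeral (c : ℕ) : Tm := (fun b => app succTm b)^[c] (churchNat 0)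

@[simp]
theorem numeral_closed (c : ℕ) : Closed (numeral c) := by
  simpa [Closed, numeral] using wellScoped_iterate_app (k := 0) succTm_closed (churchNat_closed 0) c

theorem red_numeral (c : ℕ) : Red (numeral c) (churchNat c) := red_succTm_iterate c

def bangSucc : Tm := lam (letBang (var 0) (.bang (app succTm (var 0))))

@[simp]
theorem bangSucc_closed : Closed bangSucc := by
  simp [bangSucc, Closed, wellScoped, succTm_closed.wellScoped]

theorem red_bangSucc_iterate (m a : ℕ) :
    Red ((fun b => app bangSucc b)^[m] (.bang (churchNat a))) (.bang (churchNat (m + a))) := by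
  induction m with
  | zero => simpa using Red.refl _
  | succ m ih =>
    rw [Function.iterate_succ_apply', show m + 1 + a = 1 + (m + a) by ring]
    refine (Red.congApp₂ ih).trans (Red.beta.trans ?_)
    simp [sub]
    refine Red.bang.trans ?_
    simp [sub]
    exact Red.congBang (red_add 1 _)

theorem red_funPow_add_numeral (n A c : ℕ) :
    Red (app (funPow (app addTm (churchNat n)) A) (numeral c)) (churchNat (A * n + c)) :=
  (red_funPow_app (by simp) A _).trans
    ((Red.iterate_app _ (red_numeral c) A).trans (red_add_iterate n A c))

/-- `horner c [] = λn.λh. (h)c̲` and `horner c (c' :: cs)` is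
`λn.λh. let (n)!bangSucc be §G in let ((h)c̲)!succ be §W in`
`§(let (G)!0̲ be !y in let ((W)0̲)!(add y) be §h' in §((horner c' cs) y h'))`. -/
def horner : ℕ → List ℕ → Tm
  | c, [] => lam (lam (app (var 0) (numeral c)))
  | c, c' :: cs =>
    lam (lam (letPara (app (var 1) (.bang bangSucc))
      (letPara (app (app (var 1) (numeral c)) (.bang succTm))
        (.para (letBang (app (var 1) (.bang (churchNat 0)))
          (letPara (app (app (var 1) (churchNat 0)) (.bang (app addTm (var 0))))
            (.para (app (app (horner c' cs) (var 1)) (var 0)))))))))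

@[simp]
theorem horner_closed (c : ℕ) (cs : List ℕ) : Closed (horner c cs) := by
  induction cs generalizing c with
  | nil => simp [horner, Closed, wellScoped, (numeral_closed c).wellScoped]
  | cons c' cs ih =>
    simp [horner, Closed, wellScoped, (numeral_closed c).wellScoped, (ih c').wellScoped,
      bangSucc_closed.wellScoped, succTm_closed.wellScoped, (churchNat_closed 0).wellScoped,
      addTm_closed.wellScoped]

theorem red_horner (n : ℕ) (c : ℕ) (cs : List ℕ) (A : ℕ) :
    Red (app (app (horner c cs) (churchNat n)) (funPow (app addTm (churchNat n)) A))
      (Tm.para^[2 * cs.length] (churchNat (cs.foldl (fun a c => a * n + c) (A * n + c)))) := by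
  induction cs generalizing c A with
  | nil =>
    refine (Red.congApp₁ Red.beta).trans (Red.beta.trans ?_)
    simpa [sub] using red_funPow_add_numeral n A c
  | cons c' cs ih =>
    have copy : Red (app (funPow bangSucc n) (.bang (churchNat 0))) (.bang (churchNat n)) :=
      (red_funPow_app bangSucc_closed n _).trans (by simpa using red_bangSucc_iterate n 0)
    have lift : Red (app (funPow succTm (A * n + c)) (churchNat 0)) (churchNat (A * n + c)) :=
      (red_funPow_app succTm_closed _ _).trans (red_succTm_iterate _)
    refine (Red.congApp₁ Red.beta).trans (Red.beta.trans ?_)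
    simp [sub]
    refine (Red.congLetPara₁ (red_churchNat_app_of_closed n bangSucc_closed)).trans
      (Red.para.trans ?_)
    simp [sub]
    refine (Red.congLetPara₁ ((Red.congApp₁ (red_funPow_add_numeral n A c)).trans
      (red_churchNat_app_of_closed _ succTm_closed))).trans (Red.para.trans ?_)
    simp [sub]
    refine (Red.congPara ((Red.congLetBang₁ copy).trans Red.bang)).trans ?_
    simp [sub]
    refine (Red.congPara ((Red.congLetPara₁ ((Red.congApp₁ lift).trans
      (red_churchNat_app_of_closed _ (by simp)))).trans Red.para)).trans ?_
    simp [sub]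
    rw [show 2 * (cs.length + 1) = 2 * cs.length + 1 + 1 by ring,
      Function.iterate_succ_apply', Function.iterate_succ_apply']
    exact Red.congPara (Red.congPara (ih c' (A * n + c)))

def polyTm (c : ℕ) (cs : List ℕ) : Tm := lam (app (app (horner c cs) (var 0)) (lam (var 0)))

theorem red_polyTm (c : ℕ) (cs : List ℕ) (n : ℕ) :
    Red (app (polyTm c cs) (churchNat n))
      (Tm.para^[2 * cs.length] (churchNat (cs.foldl (fun a c => a * n + c) c))) := by
  refine Red.beta.trans ?_
  simpa [sub, funPow] using red_horner n c cs 0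

theorem Tj.natElim {Γ : List (Mark × Ty)} {t : Tm} (B : Ty) (h : Tj Γ t natTy) :
    Tj Γ t (.lolli (.bang (.lolli B B)) (.para (.lolli B B))) := by
  simpa [substTy] using Tj.allE B h

theorem Tj.app_of_nil_left {Δ : List (Mark × Ty)} {t u : Tm} {A B : Ty}
    (ht : Tj [] t (.lolli A B)) (hu : Tj Δ u A) : Tj Δ (.app t u) B := by
  simpa using Tj.app ht hu

theorem Tj.app_of_nil_right {Γ : List (Mark × Ty)} {t u : Tm} {A B : Ty}
    (ht : Tj Γ t (.lolli A B)) (hu : Tj [] u A) (hc : Closed u) : Tj Γ (.app t u) B := by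
  simpa [hc] using Tj.app ht hu

theorem Tj.paraI_of_discharged {Γ : List (Mark × Ty)} {t : Tm} {A : Ty}
    (h : Tj (Γ.map fun e => (Mark.pl, e.2)) t A) (hΓ : ∀ e ∈ Γ, e.1 ≠ Mark.pl) :
    Tj Γ (.para t) (.para A) :=
  Tj.paraI h (fun e he => by obtain ⟨_, -, rfl⟩ := List.mem_map.1 he; rfl)
    (List.forall₂_map_left_iff.2 (List.forall₂_same.2 fun e he => ⟨rfl, hΓ e he⟩))

theorem Tj.churchNat_of_body {body : Tm}
    (h : Tj [(.pl, .tvar 0), (.pl, .lolli (.tvar 0) (.tvar 0))] body (.tvar 0)) :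
    Tj [] (.lam (.letBang (.var 0) (.para (.lam body)))) natTy :=
  Tj.allI (Tj.lam (Tj.bangE (Γ := []) (Tj.ax _)
    (Tj.paraI_of_discharged (Γ := [(.db, _)]) (Tj.lam h) (by simp))))

theorem tj_churchNat_zero : Tj [] (churchNat 0) natTy :=
  Tj.churchNat_of_body (Tj.exch (Γ := []) (Tj.weak _ (Tj.ax _)))

theorem tj_churchNat_one : Tj [] (churchNat 1) natTy :=
  Tj.churchNat_of_body (Tj.exch (Γ := []) (Tj.app (Γ := [(.pl, .lolli (.tvar 0) (.tvar 0))])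
    (Δ := [(.pl, .tvar 0)]) (Tj.ax _) (Tj.ax _)))

theorem tj_addTm : Tj [] addTm (.lolli natTy (.lolli natTy natTy)) := by
  let F : Ty := .lolli (.tvar 0) (.tvar 0)
  have f : Tj [(.pl, F)] (.var 0) F := Tj.ax _
  have comp := Tj.app (Γ := [(.pl, F)]) (Δ := [(.pl, F), (.pl, .tvar 0)]) f
    (Tj.app (Γ := [(.pl, F)]) (Δ := [(.pl, .tvar 0)]) f (Tj.ax _))
  have comp' := Tj.exch (Γ := [(.pl, .tvar 0)]) (Δ := []) (a := (.pl, F)) (b := (.pl, F))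
    (Tj.exch (Γ := []) (Δ := [(.pl, F)]) (a := (.pl, F)) (b := (.pl, .tvar 0))
      (Tj.exch (Γ := [(.pl, F)]) (Δ := []) (a := (.pl, F)) (b := (.pl, .tvar 0)) comp))
  have iter := Tj.app (Γ := [(.pl, natTy)]) (Δ := [(.db, F)])
    (Tj.natElim (.tvar 0) (Tj.ax _)) (Tj.bangI₁ f)
  have lets := Tj.paraE (Γ := [(.pl, natTy), (.db, F)]) iter (Tj.paraE (Γ := [(.dp, F)]) iter
    (Tj.paraI_of_discharged (Γ := [(.dp, F), (.dp, F)]) (Tj.lam comp') (by simp)))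
  have shared := Tj.cntr (Tj.exch (Γ := [(.db, F)]) (Δ := [(.pl, natTy)])
    (Tj.exch (Γ := [(.db, F), (.pl, natTy)]) (Δ := []) (a := (.pl, natTy)) (b := (.db, F))
      (Tj.exch (Γ := []) (Δ := [(.pl, natTy), (.db, F)]) (a := (.pl, natTy)) (b := (.db, F))
        lets)))
  -- `u` is bound innermost but consumed first, so it has to travel to the end of the context
  have body := Tj.exch (Γ := []) (Δ := [(.pl, natTy)])
    (Tj.exch (Γ := [(.pl, natTy)]) (Δ := []) (a := (.pl, natTy)) (b := (.pl, .bang F))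
      (Tj.bangE (Γ := [(.pl, natTy), (.pl, natTy)]) (Tj.ax _) shared))
  exact Tj.lam (Tj.lam (Tj.allI (Γ := [(.pl, natTy), (.pl, natTy)]) (Tj.lam body)))

theorem tj_succTm : Tj [] succTm (.lolli natTy natTy) :=
  Tj.app_of_nil_right tj_addTm tj_churchNat_one (churchNat_closed 1)

theorem tj_numeral (c : ℕ) : Tj [] (numeral c) natTy := by
  induction c with
  | zero => exact tj_churchNat_zero
  | succ c ih =>
    rw [numeral, Function.iterate_succ_apply']
    exact Tj.app_of_nil_left tj_succTm ih

theorem tj_bangSucc : Tj [] bangSucc (.lolli (.bang natTy) (.bang natTy)) :=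
  Tj.lam (Tj.bangE (Γ := []) (Tj.ax _)
    (Tj.bangI₁ (Tj.app_of_nil_left tj_succTm (Tj.ax _))))

theorem tj_horner (c : ℕ) (cs : List ℕ) :
    Tj [] (horner c cs)
      (.lolli natTy (.lolli (.lolli natTy natTy) (Ty.para^[2 * cs.length] natTy))) := by
  induction cs generalizing c with
  | nil =>
    have h := Tj.exch (Γ := []) (Tj.weak (.pl, natTy)
      (Tj.app_of_nil_right (Tj.ax (.lolli natTy natTy)) (tj_numeral c) (numeral_closed c)))
    simp only [rename, swapF, (numeral_closed c).rename_eq] at h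
    exact Tj.lam (Tj.lam h)
  | cons c' cs ih =>
    let NN : Ty := .lolli natTy natTy
    have next := Tj.exch (Γ := []) (Tj.app (Γ := [(.pl, natTy)]) (Δ := [(.pl, NN)])
      (Tj.app_of_nil_left (ih c') (Tj.ax _)) (Tj.ax _))
    have mult := Tj.exch (Γ := []) (Tj.app (Γ := [(.pl, NN)]) (Δ := [(.db, natTy)])
      (Tj.natElim natTy (Tj.app_of_nil_right (Tj.ax _) tj_churchNat_zero (churchNat_closed 0)))
      (Tj.bangI₁ (Tj.app_of_nil_left tj_addTm (Tj.ax _))))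
    have r1 := Tj.cntr (Tj.paraE (Γ := [(.db, natTy)]) mult
      (Tj.paraI_of_discharged (Γ := [(.dp, NN), (.db, natTy)]) next (by simp)))
    have r2 := Tj.paraI_of_discharged
      (Γ := [(.dp, NN), (.dp, .lolli (.bang natTy) (.bang natTy))])
      (Tj.bangE (Γ := [(.pl, NN)])
        (Tj.app_of_nil_right (Tj.ax _) (Tj.bangI₀ tj_churchNat_zero) (churchNat_closed 0)) r1)
      (by simp)
    have acc := Tj.app_of_nil_right
      (Tj.natElim natTy (Tj.app_of_nil_right (Tj.ax NN) (tj_numeral c) (numeral_closed c)))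
      (Tj.bangI₀ tj_succTm) succTm_closed
    have coerce := Tj.app_of_nil_right (Tj.natElim (.bang natTy) (Tj.ax _))
      (Tj.bangI₀ tj_bangSucc) bangSucc_closed
    have r3 := Tj.paraE (Γ := [(.pl, NN)]) coerce (Tj.paraE (Γ := [(.dp, _)]) acc r2)
    rw [List.length_cons, show 2 * (cs.length + 1) = 2 * cs.length + 1 + 1 by ring,
      Function.iterate_succ_apply', Function.iterate_succ_apply']
    simpa [horner, rename, upRen, swapF] using Tj.lam (Tj.lam r3)

theorem tj_polyTm (c : ℕ) (cs : List ℕ) :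
    Tj [] (polyTm c cs) (.lolli natTy (Ty.para^[2 * cs.length] natTy)) :=
  Tj.lam (Tj.app_of_nil_right (Tj.app_of_nil_left (tj_horner c cs) (Tj.ax _))
    (Tj.lam (Tj.ax _)) (by decide))

theorem foldl_horner (f : ℕ → ℕ) (n A d : ℕ) :
    ((List.range d).reverse.map f).foldl (fun a c => a * n + c) A
      = A * n ^ d + ∑ i ∈ Finset.range d, f i * n ^ i := by
  induction d generalizing A with
  | zero => simp
  | succ d ih =>
    simp only [List.range_succ, List.reverse_append, List.reverse_singleton,
      List.singleton_append, List.map_cons, List.foldl_cons, ih, Finset.sum_range_succ]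
    ring

end LAL

open LAL in
/-- For every polynomial `P` with coefficients in ℕ there
are an integer `k` and a closed term `t_P : N ⊸ §^k N` representing `P` on
Church numerals. -/
theorem polynomial_representable (P : Polynomial ℕ) :
    ∃ (k : ℕ) (tP : Tm),
      Tj [] tP (Ty.lolli natTy (Ty.para^[k] natTy)) ∧
      ∀ n : ℕ, Red (Tm.app tP (churchNat n)) (Tm.para^[k] (churchNat (P.eval n))) := by
  set d := P.natDegree
  set cs := (List.range d).reverse.map P.coeff
  have hcs : cs.length = d := by simp [cs]
  refine ⟨2 * d, polyTm (P.coeff d) cs, hcs ▸ tj_polyTm _ cs, fun n => ?_⟩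
  have heval : cs.foldl (fun a c => a * n + c) (P.coeff d) = P.eval n := by
    rw [foldl_horner, Polynomial.eval_eq_sum_range, Finset.sum_range_succ, add_comm]
  simpa [hcs, heval] using red_polyTm (P.coeff d) cs n
end
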